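/- Let b(r) = C(2r, r)/4^r and let P(n, r) = ((2r+1)(2n-2r-1)/n^2) * b(r)^2 * b(n-r-1) * b(2r+1) / (b(2r) * b(r+n)). Fix 0 < α < 1 and let r = r(n) be any sequence of integers with r(n)/n → α. Then n * P(n, r(n)) → (4/π) * sqrt(1 - α^2) as n → ∞. -/

import Mathlib

open Filter Real Nat

noncomputable def b (r : ℕ) : ℝ := (Nat.choose (2*r) r : ℝ) / 4^r

noncomputable def P (n r : ℕ) : ℝ :=
  ((2*(r:ℝ)+1) * (2*(n:ℝ) - 2*r - 1) / (n:ℝ)^2) * (b r)^2 * b (n-r-1) * b (2*r+1)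
    / (b (2*r) * b (r+n))

lemma b_pos (m : ℕ) : 0 < b m := by
  unfold b
  have : 0 < Nat.choose (2*m) m := Nat.choose_pos (by omega)
  positivity

lemma choose_cast (m : ℕ) : (Nat.choose (2*m) m : ℝ) = (2*m)! / (m ! * m !) := by
  rw [eq_div_iff (by positivity), ← mul_assoc]
  have h := Nat.choose_mul_factorial_mul_factorial (show m ≤ 2*m by omega)
  have h2 : 2*m - m = m := by omega
  rw [h2] at h
  exact_mod_cast congrArg (Nat.cast (R := ℝ)) h

lemma sqrt_mul_b (m : ℕ) (hm : 0 < m) :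
    Real.sqrt m * b m = Stirling.stirlingSeq (2*m) / (Stirling.stirlingSeq m)^2 := by
  have hmR : (0:ℝ) < m := by exact_mod_cast hm
  unfold Stirling.stirlingSeq b
  rw [choose_cast]
  have hc : ((2*m : ℕ) : ℝ) = 2*(m:ℝ) := by push_cast; ring
  rw [hc]
  have h1 : Real.sqrt (2*(2*(m:ℝ))) = 2 * Real.sqrt m := by
    rw [show 2*(2*(m:ℝ)) = 4 * m by ring, Real.sqrt_mul (by norm_num),
      show (4:ℝ) = 2^2 by norm_num, Real.sqrt_sq (by norm_num)]
  rw [h1]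
  have h2 : ((2*(m:ℝ))/Real.exp 1)^(2*m) = 4^m * (((m:ℝ)/Real.exp 1)^m)^2 := by
    rw [show (2*(m:ℝ))/Real.exp 1 = 2 * ((m:ℝ)/Real.exp 1) by ring, mul_pow,
      pow_mul, show (2:ℝ)^2 = 4 by norm_num, show 2*m = m*2 by ring, pow_mul]
  rw [h2]
  have hT2 : Real.sqrt (2*(m:ℝ)) ^ 2 = 2 * Real.sqrt (m:ℝ) ^ 2 := by
    rw [Real.sq_sqrt (by positivity), Real.sq_sqrt (by positivity)]
  have hfact : (m ! : ℝ) ≠ 0 := by positivity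
  have hS : Real.sqrt (m:ℝ) ≠ 0 := by positivity
  have hT : Real.sqrt (2*(m:ℝ)) ≠ 0 := by positivity
  have hE : ((m:ℝ)/Real.exp 1)^m ≠ 0 := by positivity
  have h4 : (4:ℝ)^m ≠ 0 := by positivity
  generalize ((m:ℝ)/Real.exp 1)^m = E at hE ⊢
  generalize hTT : Real.sqrt (2*(m:ℝ)) = T at hT hT2 ⊢
  generalize hSS : Real.sqrt (m:ℝ) = S at hS hT2 ⊢
  field_simp
  linear_combination (-1) * hT2

noncomputable def L (m : ℕ) : ℝ := Real.sqrt m * b m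

lemma hL' : Tendsto L atTop (nhds (Real.sqrt Real.pi)⁻¹) := by
  have hπ : Real.sqrt Real.pi ≠ 0 := by positivity
  have h2 : Tendsto (fun m : ℕ => Stirling.stirlingSeq (2*m)) atTop (nhds (Real.sqrt Real.pi)) :=
    Stirling.tendsto_stirlingSeq_sqrt_pi.comp (tendsto_atTop_mono (fun n => (by omega : n ≤ 2*n)) tendsto_id)
  have h3 : Tendsto (fun m : ℕ => Stirling.stirlingSeq (2*m) / (Stirling.stirlingSeq m)^2)
      atTop (nhds (Real.sqrt Real.pi / (Real.sqrt Real.pi)^2)) :=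
    h2.div (Stirling.tendsto_stirlingSeq_sqrt_pi.pow 2) (by positivity)
  have heq : Real.sqrt Real.pi / (Real.sqrt Real.pi)^2 = (Real.sqrt Real.pi)⁻¹ := by
    field_simp
  rw [heq] at h3
  apply h3.congr'
  filter_upwards [eventually_gt_atTop 0] with m hm
  exact (sqrt_mul_b m hm).symm

set_option maxHeartbeats 1000000 in
theorem stmt_13 (α : ℝ) (h0 : 0 < α) (h1 : α < 1) (r : ℕ → ℕ)
    (hr : Filter.Tendsto (fun n : ℕ => (r n : ℝ) / n) Filter.atTop (nhds α)) :
    Filter.Tendsto (fun n : ℕ => (n : ℝ) * P n (r n)) Filter.atTop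
      (nhds ((4 / Real.pi) * Real.sqrt (1 - α^2))) := by
  have hπ : 0 < Real.pi := Real.pi_pos
  set c : ℝ := (Real.sqrt Real.pi)⁻¹ with hc
  have hcpos : 0 < c := by positivity
  -- eventual bounds
  have hlow : ∀ᶠ n : ℕ in atTop, α/2 < (r n : ℝ)/n :=
    hr.eventually (eventually_gt_nhds (by linarith))
  have hhigh : ∀ᶠ n : ℕ in atTop, (r n : ℝ)/n < (1+α)/2 :=
    hr.eventually (eventually_lt_nhds (by linarith))
  have hcastN : Tendsto (fun n : ℕ => (n:ℝ)) atTop atTop := tendsto_natCast_atTop_atTop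
  -- r n → ∞
  have hrtop : Tendsto r atTop atTop := by
    rw [← tendsto_natCast_atTop_iff (R := ℝ)]
    refine tendsto_atTop_mono' atTop (f₁ := fun n : ℕ => α/2 * (n:ℝ)) ?_ ?_
    · filter_upwards [hlow, eventually_gt_atTop 0] with n hn hn1
      have hn0 : (0:ℝ) < n := by exact_mod_cast hn1
      rw [lt_div_iff₀ hn0] at hn
      linarith
    · exact (tendsto_const_mul_atTop_of_pos (by linarith)).mpr hcastN
  -- n - r n - 1 → ∞
  have hlt : ∀ᶠ n : ℕ in atTop, r n + 1 < n := by
    filter_upwards [hhigh, hcastN.eventually_ge_atTop (4/(1-α)), eventually_gt_atTop 0]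
      with n hn hn4 hn1
    have hn0 : (0:ℝ) < n := by exact_mod_cast hn1
    rw [div_lt_iff₀ hn0] at hn
    have h1α : (0:ℝ) < 1 - α := by linarith
    have : (4:ℝ) ≤ (1-α) * n := by
      rw [div_le_iff₀ h1α] at hn4; linarith [hn4]
    have : ((r n : ℝ)) + 1 < n := by nlinarith
    exact_mod_cast (by push_cast; linarith : ((r n + 1 : ℕ) : ℝ) < (n:ℕ))
  have hstop : Tendsto (fun n => n - r n - 1) atTop atTop := by
    rw [← tendsto_natCast_atTop_iff (R := ℝ)]
    refine tendsto_atTop_mono' atTop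
      (f₁ := fun n : ℕ => (1-α)/2 * (n:ℝ) - 1) ?_ ?_
    · filter_upwards [hhigh, hlt, eventually_gt_atTop 0] with n hn hl hn1
      have hn0 : (0:ℝ) < n := by exact_mod_cast hn1
      rw [div_lt_iff₀ hn0] at hn
      have hcast : ((n - r n - 1 : ℕ) : ℝ) = (n:ℝ) - r n - 1 := by
        rw [show n - r n - 1 = n - (r n + 1) by omega, Nat.cast_sub (by omega)]
        push_cast; ring
      rw [hcast]
      linarith
    · have hmul : Tendsto (fun n : ℕ => (1-α)/2 * (n:ℝ)) atTop atTop :=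
        (tendsto_const_mul_atTop_of_pos (by linarith)).mpr hcastN
      exact (tendsto_atTop_add_const_right _ (-1) hmul).congr (by intro x; ring)
  -- composite L limits
  have e3 : Tendsto (fun n => 2 * r n) atTop atTop :=
    tendsto_atTop_mono (fun n => (by omega : r n ≤ 2 * r n)) hrtop
  have e4 : Tendsto (fun n => 2 * r n + 1) atTop atTop :=
    tendsto_atTop_mono (fun n => (by omega : r n ≤ 2 * r n + 1)) hrtop
  have e5 : Tendsto (fun n => r n + n) atTop atTop :=
    tendsto_atTop_mono (fun n => (by omega : r n ≤ r n + n)) hrtop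
  have hRlim : Tendsto (fun n => L (r n)^2 * L (n - r n - 1) * L (2*r n + 1)
      / (L (2*r n) * L (r n + n))) atTop (nhds (c^2 * c * c / (c * c))) :=
    ((((hL'.comp hrtop).pow 2).mul (hL'.comp hstop)).mul (hL'.comp e4)).div
      ((hL'.comp e3).mul (hL'.comp e5)) (by positivity)
  -- G limits
  have hdiv : Tendsto (fun n : ℕ => 1/(n:ℝ)) atTop (nhds 0) :=
    tendsto_one_div_atTop_nhds_zero_nat
  have ht1 : Tendsto (fun n : ℕ => 2*((r n:ℝ)/n) + 1/n) atTop (nhds (2*α)) := by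
    have := (hr.const_mul 2).add hdiv
    simpa using this
  have ht2 : Tendsto (fun n : ℕ => 2 - 2*((r n:ℝ)/n) - 1/n) atTop (nhds (2-2*α)) := by
    have := (tendsto_const_nhds (x := (2:ℝ)).sub (hr.const_mul 2)).sub hdiv
    simpa using this
  have ht3 : Tendsto (fun n : ℕ => ((r n:ℝ)/n)⁻¹) atTop (nhds α⁻¹) := hr.inv₀ h0.ne'
  have ht4top : Tendsto (fun n : ℕ => 2*((r n:ℝ)/n) * (1 + (r n:ℝ)/n)) atTop
      (nhds (2*α * (1+α))) := (hr.const_mul 2).mul (tendsto_const_nhds.add hr)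
  have ht4bot : Tendsto (fun n : ℕ => (1 - (r n:ℝ)/n - 1/n) * (2*((r n:ℝ)/n) + 1/n)) atTop
      (nhds ((1-α) * (2*α))) := by
    have := ((tendsto_const_nhds (x := (1:ℝ)).sub hr).sub hdiv).mul ht1
    simpa using this
  have ht4 : Tendsto (fun n : ℕ => Real.sqrt ((2*((r n:ℝ)/n) * (1 + (r n:ℝ)/n))
      / ((1 - (r n:ℝ)/n - 1/n) * (2*((r n:ℝ)/n) + 1/n)))) atTop
      (nhds (Real.sqrt ((2*α * (1+α)) / ((1-α) * (2*α))))) :=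
    (Real.continuous_sqrt.tendsto _).comp (ht4top.div ht4bot (mul_pos (by linarith : (0:ℝ) < 1-α) (by linarith : (0:ℝ) < 2*α)).ne')
  have hGlim : Tendsto (fun n : ℕ => (2*((r n:ℝ)/n) + 1/n) * (2 - 2*((r n:ℝ)/n) - 1/n)
      * ((r n:ℝ)/n)⁻¹ * Real.sqrt ((2*((r n:ℝ)/n) * (1 + (r n:ℝ)/n))
      / ((1 - (r n:ℝ)/n - 1/n) * (2*((r n:ℝ)/n) + 1/n)))) atTop
      (nhds ((2*α) * (2-2*α) * α⁻¹ * Real.sqrt ((2*α * (1+α)) / ((1-α) * (2*α))))) :=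
    ((ht1.mul ht2).mul ht3).mul ht4
  have htot := hRlim.mul hGlim
  -- identify the limit
  have hfinal : (c^2 * c * c / (c * c)) *
      ((2*α) * (2-2*α) * α⁻¹ * Real.sqrt ((2*α * (1+α)) / ((1-α) * (2*α))))
      = (4 / Real.pi) * Real.sqrt (1 - α^2) := by
    have hcne : c ≠ 0 := hcpos.ne'
    have h1α : (0:ℝ) < 1 - α := by linarith
    have hc2 : c^2 * c * c / (c * c) = c^2 := by field_simp
    have hcπ : c^2 = Real.pi⁻¹ := by
      rw [hc, inv_pow, Real.sq_sqrt hπ.le]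
    have harg : (2*α * (1+α)) / ((1-α) * (2*α)) = (1+α)/(1-α) := by
      rw [div_eq_div_iff (by positivity) (by positivity)]; ring
    have hsd : Real.sqrt ((1+α)/(1-α)) = Real.sqrt (1+α) / Real.sqrt (1-α) :=
      Real.sqrt_div (by linarith) _
    have hms : Real.sqrt (1-α) * Real.sqrt (1-α) = 1-α := Real.mul_self_sqrt h1α.le
    have h2 : Real.sqrt (1 - α^2) = Real.sqrt (1-α) * Real.sqrt (1+α) := by
      rw [show (1:ℝ) - α^2 = (1-α)*(1+α) by ring, Real.sqrt_mul (by linarith)]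
    rw [hc2, hcπ, harg, hsd, h2]
    have hsne : Real.sqrt (1-α) ≠ 0 := by positivity
    field_simp
    linear_combination (-4) * hms
  rw [hfinal] at htot
  apply htot.congr'
  filter_upwards [hlt, hrtop.eventually_ge_atTop 1, eventually_gt_atTop 0]
    with n hltn hm1n hn1
  set m := r n with hm
  have hn0 : (0:ℝ) < n := by exact_mod_cast hn1
  have hm0 : (1:ℝ) ≤ m := by exact_mod_cast hm1n
  have hmn : (m:ℝ) + 1 < (n:ℝ) := by exact_mod_cast hltn
  have hnm1 : (0:ℝ) < (n:ℝ) - m - 1 := by linarith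
  have hc1 : ((n - m - 1 : ℕ) : ℝ) = (n:ℝ) - m - 1 := by
    rw [show n - m - 1 = n - (m+1) by omega, Nat.cast_sub (by omega)]
    push_cast; ring
  simp only [L, P]
  rw [hc1]
  push_cast
  have harg2 : (2*((m:ℝ)/n) * (1 + (m:ℝ)/n)) / ((1 - (m:ℝ)/n - 1/n) * (2*((m:ℝ)/n) + 1/n))
      = (2*(m:ℝ) * ((m:ℝ)+n)) / (((n:ℝ)-m-1) * (2*(m:ℝ)+1)) := by
    have hne1 : (1:ℝ) - (m:ℝ)/n - 1/n ≠ 0 := by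
      have : (1:ℝ) - (m:ℝ)/n - 1/n = ((n:ℝ)-m-1)/n := by field_simp
      rw [this]; positivity
    have hne2 : 2*((m:ℝ)/n) + 1/n ≠ 0 := by positivity
    rw [div_eq_div_iff (by positivity) (by positivity)]
    field_simp
    ring
  rw [harg2, Real.sqrt_div (by positivity), Real.sqrt_mul (by positivity),
    Real.sqrt_mul (le_of_lt hnm1)]
  rw [mul_pow, Real.sq_sqrt (by positivity : (0:ℝ) ≤ (m:ℝ))]
  have hb1 : b m ≠ 0 := (b_pos m).ne'
  have hb2 : b (n - m - 1) ≠ 0 := (b_pos _).ne'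
  have hb3 : b (2*m+1) ≠ 0 := (b_pos _).ne'
  have hb4 : b (2*m) ≠ 0 := (b_pos _).ne'
  have hb5 : b (m+n) ≠ 0 := (b_pos _).ne'
  have hs2 : Real.sqrt ((n:ℝ)-m-1) ≠ 0 := by positivity
  have hs3 : Real.sqrt (2*(m:ℝ)+1) ≠ 0 := by positivity
  have hs4 : Real.sqrt (2*(m:ℝ)) ≠ 0 := by positivity
  have hs5 : Real.sqrt ((m:ℝ)+n) ≠ 0 := by positivity
  have hsq : Real.sqrt ((n:ℝ)*m*2 + m^2*2) = Real.sqrt 2 * Real.sqrt m * Real.sqrt (n+m) := by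
    rw [show ((n:ℝ)*m*2 + m^2*2) = 2*m*(n+m) by ring, Real.sqrt_mul (by positivity),
      Real.sqrt_mul (by positivity)]
  field_simp
  ring_nf
  rw [hsq]
  ring
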